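/- Let K be a field and A a K-algebra. If A is amenable, then A satisfies the strong rank condition. -/
import Mathlib

theorem statement17' (K A : Type*) [Field K] [Ring A] [Algebra K A]
    (hA : ∀ U : Submodule K A, FiniteDimensional K U →
    ∀ p : ℝ, 1 < p →
      ∃ V : Submodule K A, FiniteDimensional K V ∧
        (Module.finrank K ↥(U * V) : ℝ) < p * (Module.finrank K ↥V : ℝ)) :
    ∀ m n : ℕ, 0 < m → m < n →
    ¬ ∃ f : (Fin n → Aᵐᵒᵖ) →ₗ[Aᵐᵒᵖ] (Fin m → Aᵐᵒᵖ), Function.Injective f := by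
  intro m n hm hmn ⟨f, hf⟩
  set a : Fin n → Fin m → A := fun j i => (f (Pi.single j 1) i).unop with ha
  have key : ∀ x : Fin n → Aᵐᵒᵖ, ∀ i, f x i = MulOpposite.op (∑ j, a j i * (x j).unop) := by
    intro x i
    have hx : x = ∑ j, x j • Pi.single j (1 : Aᵐᵒᵖ) := by
      funext k
      simp [Finset.sum_apply, Pi.single_apply, Finset.sum_ite_eq']
    conv_lhs => rw [hx]
    rw [map_sum]
    have hop : MulOpposite.op (∑ j, a j i * (x j).unop)
        = ∑ j, MulOpposite.op (a j i * (x j).unop) :=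
      map_sum (MulOpposite.opAddEquiv : A ≃+ Aᵐᵒᵖ) _ _
    rw [hop]
    simp only [Finset.sum_apply, LinearMap.map_smul, Pi.smul_apply, smul_eq_mul]
    refine Finset.sum_congr rfl fun j _ => ?_
    rw [ha, MulOpposite.op_mul, MulOpposite.op_unop]
    simp
  set U : Submodule K A := Submodule.span K (Set.range fun p : Fin n × Fin m => a p.1 p.2)
    with hUdef
  have hU : FiniteDimensional K U := FiniteDimensional.span_of_finite K (Set.finite_range _)
  have hm0 : (0 : ℝ) < m := by exact_mod_cast hm
  have hp : (1 : ℝ) < (n : ℝ) / m := (one_lt_div hm0).2 (by exact_mod_cast hmn)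
  obtain ⟨V, hV, hdim⟩ := hA U hU ((n : ℝ) / m) hp
  -- the K-linear map
  have hmem : ∀ (v : Fin n → V) (i : Fin m), (∑ j, a j i * (v j : A)) ∈ U * V := by
    intro v i
    exact Submodule.sum_mem _ fun j _ => Submodule.mul_mem_mul
      (Submodule.subset_span ⟨(j, i), rfl⟩) (v j).2
  let Φ : (Fin n → V) →ₗ[K] (Fin m → ↥(U * V)) :=
    { toFun := fun v i => ⟨∑ j, a j i * (v j : A), hmem v i⟩
      map_add' := by
        intro v w
        funext i
        ext
        simp [mul_add, Finset.sum_add_distrib]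
      map_smul' := by
        intro c v
        funext i
        ext
        simp [mul_smul_comm, Finset.smul_sum] }
  have hΦinj : Function.Injective Φ := by
    refine (injective_iff_map_eq_zero Φ).2 fun v hv => ?_
    set x : Fin n → Aᵐᵒᵖ := fun j => MulOpposite.op (v j : A) with hxd
    have hfx : f x = 0 := by
      funext i
      have h0 : (∑ j, a j i * ((v j : A))) = 0 :=
        congrArg Subtype.val (congrFun hv i)
      rw [key x i]
      simp only [hxd, MulOpposite.unop_op, h0, MulOpposite.op_zero, Pi.zero_apply]
    have : x = 0 := hf (by rw [hfx, map_zero])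
    funext j
    have := congrFun this j
    rw [hxd] at this
    ext
    simpa using MulOpposite.op_injective (by simpa using this)
  have hUV : FiniteDimensional K ↥(U * V) :=
    ((U * V).fg_iff_finiteDimensional).1
      (((U.fg_iff_finiteDimensional).2 hU).mul ((V.fg_iff_finiteDimensional).2 hV))
  have hle : n * Module.finrank K V ≤ m * Module.finrank K ↥(U * V) := by
    have := LinearMap.finrank_le_finrank_of_injective hΦinj
    simpa [Module.finrank_pi_fintype, Finset.card_univ, smul_eq_mul] using this
  have hle' : (n : ℝ) * Module.finrank K V ≤ m * Module.finrank K ↥(U * V) := by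
    exact_mod_cast hle
  rw [div_mul_eq_mul_div, lt_div_iff₀ hm0] at hdim
  nlinarith [hdim, hle']


/-- A `K`-algebra `A` is amenable if for every finite-dimensional `K`-subspace `U` of `A`
and every real `p > 1` there exists a finite-dimensional `K`-subspace `V` of `A` with
`dim_K (U*V) < p * dim_K V`.  Here `U*V` denotes the `K`-span of all products `u * v`
with `u ∈ U`, `v ∈ V`. -/
def IsAmenableAlgebra (K A : Type*) [Field K] [Ring A] [Algebra K A] : Prop :=
  ∀ U : Submodule K A, FiniteDimensional K U →
    ∀ p : ℝ, 1 < p →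
      ∃ V : Submodule K A, FiniteDimensional K V ∧
        (Module.finrank K ↥(U * V) : ℝ) < p * (Module.finrank K ↥V : ℝ)

/-- A ring `A` satisfies the (right) strong rank condition if for all positive integers
`m < n` there is no injective homomorphism of right `A`-modules `A^n → A^m`.
Right `A`-modules are treated as left modules over the opposite ring `Aᵐᵒᵖ`. -/
def RightStrongRankCondition (A : Type*) [Ring A] : Prop :=
  ∀ m n : ℕ, 0 < m → m < n →
    ¬ ∃ f : (Fin n → Aᵐᵒᵖ) →ₗ[Aᵐᵒᵖ] (Fin m → Aᵐᵒᵖ), Function.Injective f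

/-- Let `K` be a field and `A` a `K`-algebra.  If `A` is amenable, then `A` satisfies
the strong rank condition. -/
theorem statement17 (K A : Type*) [Field K] [Ring A] [Algebra K A]
    (hA : IsAmenableAlgebra K A) :
    RightStrongRankCondition A := by
  exact statement17' K A hA
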